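/- Let s > 1, δ ∈ (0,1), 0 < σ ≤ (1−δ)/s, and 0 < τ' < τ. Let K > 1 and let ξ, η ∈ ℝ^d satisfy |η| ≤ |ξ − η|/K. Then exp( τ'⟨ξ⟩^σ − τ⟨η⟩^σ − τ⟨ξ⟩^{−δ/s}⟨ξ−η⟩^{1/s} ) ≤ exp( −( τ − (K^σ − (K−1)^σ)·τ' )·⟨η⟩^σ ) · exp( −( τ·(1 + 1/K)^{−δ/s} − τ' )·⟨ξ−η⟩^{(1−δ)/s} ). -/

import Mathlib

/-!
Write `a = ⟨η⟩`, `b = ⟨ξ - η⟩`, `c = ⟨ξ⟩`. The bracket is 1-Lipschitz, so `c ≤ b + |η|`, and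
`K|η| ≤ b` in the region considered. Since `x ↦ (x + h)^σ - x^σ` is antitone for `σ ≤ 1`, moving
`b` down to `K|η|` gives `c^σ ≤ b^σ + ((K+1)^σ - K^σ)|η|^σ ≤ b^σ + (K^σ - (K-1)^σ) a^σ`, and
`b^σ ≤ b^{(1-δ)/s}` because `b ≥ 1`. On the other hand `c ≤ (1 + 1/K) b`, so
`c^{-δ/s} b^{1/s} ≥ (1 + 1/K)^{-δ/s} b^{(1-δ)/s}`. Multiplying the first bound by `τ'` and the
second by `τ` and adding gives the inequality of the exponents.
-/

open MeasureTheory Real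
open scoped FourierTransform ENNReal

noncomputable section

/-- `ℝ^d` as a Euclidean space. -/
abbrev E (d : ℕ) := EuclideanSpace ℝ (Fin d)

/-- The Japanese bracket `⟨ξ⟩ = (1 + |ξ|²)^{1/2}`. -/
def jap {d : ℕ} (ξ : E d) : ℝ := Real.sqrt (1 + ‖ξ‖ ^ 2)

namespace Real

theorem antitoneOn_rpow_add_sub_rpow {p h : ℝ} (hp0 : 0 ≤ p) (hp1 : p ≤ 1) (hh : 0 ≤ h) :
    AntitoneOn (fun x : ℝ => (x + h) ^ p - x ^ p) (Set.Ici 0) := by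
  have hderiv : ∀ x ∈ Set.Ioi (0 : ℝ), HasDerivAt (fun x : ℝ => (x + h) ^ p - x ^ p)
      (1 * p * (x + h) ^ (p - 1) - p * x ^ (p - 1)) x := fun x (hx : 0 < x) =>
    (((hasDerivAt_id x).add_const h).rpow_const (Or.inl (by simp; positivity))).sub
      (hasDerivAt_rpow_const (Or.inl hx.ne'))
  refine antitoneOn_of_deriv_nonpos (convex_Ici 0) ?_ ?_ ?_
  · exact (((continuous_rpow_const hp0).comp (continuous_id.add continuous_const)).sub
      (continuous_rpow_const hp0)).continuousOn
  · rw [interior_Ici]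
    exact fun x hx => (hderiv x hx).differentiableAt.differentiableWithinAt
  · rw [interior_Ici]
    intro x (hx : 0 < x)
    rw [(hderiv x hx).deriv]
    have : (x + h) ^ (p - 1) ≤ x ^ (p - 1) := rpow_le_rpow_of_nonpos hx (by linarith) (by linarith)
    nlinarith

theorem rpow_add_sub_rpow_le_of_mul_le {p K r b : ℝ} (hp0 : 0 ≤ p) (hp1 : p ≤ 1) (hK : 1 ≤ K)
    (hr : 0 ≤ r) (hrb : K * r ≤ b) : (b + r) ^ p - b ^ p ≤ (K ^ p - (K - 1) ^ p) * r ^ p := by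
  have hK0 : 0 ≤ K := by linarith
  have hdecr_b : (b + r) ^ p - b ^ p ≤ (K * r + r) ^ p - (K * r) ^ p :=
    antitoneOn_rpow_add_sub_rpow hp0 hp1 hr (Set.mem_Ici.2 (by positivity))
      (Set.mem_Ici.2 ((by positivity : 0 ≤ K * r).trans hrb)) hrb
  have hdecr_K : (K + 1) ^ p - K ^ p ≤ K ^ p - (K - 1) ^ p := by
    simpa using antitoneOn_rpow_add_sub_rpow hp0 hp1 zero_le_one
      (Set.mem_Ici.2 (by linarith : 0 ≤ K - 1)) (Set.mem_Ici.2 hK0) (by linarith)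
  have hscale : (K * r + r) ^ p - (K * r) ^ p = ((K + 1) ^ p - K ^ p) * r ^ p := by
    rw [show K * r + r = (K + 1) * r by ring, mul_rpow (by linarith) hr, mul_rpow hK0 hr]
    ring
  calc (b + r) ^ p - b ^ p ≤ ((K + 1) ^ p - K ^ p) * r ^ p := hscale ▸ hdecr_b
    _ ≤ (K ^ p - (K - 1) ^ p) * r ^ p :=
      mul_le_mul_of_nonneg_right hdecr_K (rpow_nonneg hr p)

end Real

section JapaneseBracket

variable {d : ℕ}

theorem one_le_jap (ξ : E d) : 1 ≤ jap ξ := by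
  rw [jap, Real.one_le_sqrt]
  nlinarith [sq_nonneg ‖ξ‖]

theorem norm_le_jap (ξ : E d) : ‖ξ‖ ≤ jap ξ := by
  rw [jap, Real.le_sqrt (norm_nonneg ξ) (by positivity)]
  linarith

theorem jap_le_jap_sub_add_norm (ξ η : E d) : jap ξ ≤ jap (ξ - η) + ‖η‖ := by
  have htri : ‖ξ‖ ≤ ‖ξ - η‖ + ‖η‖ := norm_le_norm_sub_add ξ η
  have hsq : jap (ξ - η) ^ 2 = 1 + ‖ξ - η‖ ^ 2 := Real.sq_sqrt (by positivity)
  have hnorm := norm_le_jap (ξ - η)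
  rw [jap, Real.sqrt_le_left (by linarith [one_le_jap (ξ - η), norm_nonneg η])]
  nlinarith [norm_nonneg ξ, norm_nonneg η, norm_nonneg (ξ - η)]

variable {K : ℝ} {ξ η : E d}

theorem mul_norm_le_jap_sub (hK : 0 < K) (h : ‖η‖ ≤ ‖ξ - η‖ / K) : K * ‖η‖ ≤ jap (ξ - η) := by
  rw [le_div_iff₀ hK] at h
  linarith [norm_le_jap (ξ - η)]

theorem jap_le_one_add_inv_mul_jap_sub (hK : 0 < K) (h : ‖η‖ ≤ ‖ξ - η‖ / K) :
    jap ξ ≤ (1 + 1 / K) * jap (ξ - η) := by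
  have hη : ‖η‖ ≤ jap (ξ - η) / K := by
    rw [le_div_iff₀ hK, mul_comm]
    exact mul_norm_le_jap_sub hK h
  calc jap ξ ≤ jap (ξ - η) + ‖η‖ := jap_le_jap_sub_add_norm ξ η
    _ ≤ (1 + 1 / K) * jap (ξ - η) := by rw [add_mul, one_mul, one_div_mul_eq_div]; linarith

theorem jap_rpow_le_of_norm_le {σ : ℝ} (hσ0 : 0 ≤ σ) (hσ1 : σ ≤ 1) (hK : 1 ≤ K)
    (h : ‖η‖ ≤ ‖ξ - η‖ / K) :
    jap ξ ^ σ ≤ (K ^ σ - (K - 1) ^ σ) * jap η ^ σ + jap (ξ - η) ^ σ := by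
  have hcoeff : 0 ≤ K ^ σ - (K - 1) ^ σ :=
    sub_nonneg.2 (Real.rpow_le_rpow (by linarith) (by linarith) hσ0)
  have hincr := Real.rpow_add_sub_rpow_le_of_mul_le hσ0 hσ1 hK (norm_nonneg η)
    (mul_norm_le_jap_sub (by linarith) h)
  calc jap ξ ^ σ ≤ (jap (ξ - η) + ‖η‖) ^ σ :=
        Real.rpow_le_rpow (by linarith [one_le_jap ξ]) (jap_le_jap_sub_add_norm ξ η) hσ0
    _ ≤ (K ^ σ - (K - 1) ^ σ) * ‖η‖ ^ σ + jap (ξ - η) ^ σ := by linarith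
    _ ≤ (K ^ σ - (K - 1) ^ σ) * jap η ^ σ + jap (ξ - η) ^ σ := by
        gcongr
        exact norm_le_jap η

theorem one_add_inv_rpow_mul_le {θ ρ : ℝ} (hθ : 0 ≤ θ) (hK : 0 < K) (h : ‖η‖ ≤ ‖ξ - η‖ / K) :
    (1 + 1 / K) ^ (-θ) * jap (ξ - η) ^ (ρ - θ) ≤ jap ξ ^ (-θ) * jap (ξ - η) ^ ρ := by
  have hb0 : 0 < jap (ξ - η) := by linarith [one_le_jap (ξ - η)]
  have hc : ((1 + 1 / K) * jap (ξ - η)) ^ (-θ) ≤ jap ξ ^ (-θ) :=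
    Real.rpow_le_rpow_of_nonpos (by linarith [one_le_jap ξ])
      (jap_le_one_add_inv_mul_jap_sub hK h) (neg_nonpos.2 hθ)
  rw [Real.mul_rpow (by positivity) hb0.le] at hc
  rw [show ρ - θ = -θ + ρ by ring, Real.rpow_add hb0, ← mul_assoc]
  exact mul_le_mul_of_nonneg_right hc (Real.rpow_nonneg hb0.le ρ)

end JapaneseBracket

theorem stmt_13_general (s δ σ τ' τ K : ℝ) (hs : 1 < s) (hδ0 : 0 < δ)
    (hσ0 : 0 < σ) (hσ : σ ≤ (1 - δ) / s) (hτ'0 : 0 < τ') (hτ'τ : τ' < τ) (hK : 1 < K)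
    (d : ℕ) (ξ η : E d) (h : ‖η‖ ≤ ‖ξ - η‖ / K) :
    Real.exp (τ' * jap ξ ^ σ - τ * jap η ^ σ
        - τ * jap ξ ^ (-(δ / s)) * jap (ξ - η) ^ (1 / s))
      ≤ Real.exp (-(τ - (K ^ σ - (K - 1) ^ σ) * τ') * jap η ^ σ) *
        Real.exp (-(τ * (1 + 1 / K) ^ (-(δ / s)) - τ') * jap (ξ - η) ^ ((1 - δ) / s)) := by
  have hs0 : 0 < s := by linarith
  have hσ1 : σ ≤ 1 := hσ.trans ((div_le_one hs0).2 (by linarith))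
  have hlow : jap (ξ - η) ^ σ ≤ jap (ξ - η) ^ ((1 - δ) / s) :=
    Real.rpow_le_rpow_of_exponent_le (one_le_jap _) hσ
  have hhigh : jap ξ ^ σ ≤ (K ^ σ - (K - 1) ^ σ) * jap η ^ σ + jap (ξ - η) ^ ((1 - δ) / s) := by
    linarith [jap_rpow_le_of_norm_le hσ0.le hσ1 hK.le h]
  have hsymb := one_add_inv_rpow_mul_le (ρ := 1 / s) (div_nonneg hδ0.le hs0.le)
    (by linarith) h
  rw [← sub_div] at hsymb
  rw [← Real.exp_add, Real.exp_le_exp]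
  linarith [mul_le_mul_of_nonneg_left hhigh hτ'0.le,
    mul_le_mul_of_nonneg_left hsymb (by linarith : 0 ≤ τ)]

/-- Estimate of the exponential weight in the region
`|η| ≤ |ξ−η|/K` (high-frequency symbol region). -/
theorem stmt_13 (s δ σ τ' τ K : ℝ) (hs : 1 < s) (hδ0 : 0 < δ) (hδ1 : δ < 1)
    (hσ0 : 0 < σ) (hσ : σ ≤ (1 - δ) / s) (hτ'0 : 0 < τ') (hτ'τ : τ' < τ) (hK : 1 < K)
    (d : ℕ) (ξ η : E d) (h : ‖η‖ ≤ ‖ξ - η‖ / K) :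
    Real.exp (τ' * jap ξ ^ σ - τ * jap η ^ σ
        - τ * jap ξ ^ (-(δ / s)) * jap (ξ - η) ^ (1 / s))
      ≤ Real.exp (-(τ - (K ^ σ - (K - 1) ^ σ) * τ') * jap η ^ σ) *
        Real.exp (-(τ * (1 + 1 / K) ^ (-(δ / s)) - τ') * jap (ξ - η) ^ ((1 - δ) / s)) :=
  stmt_13_general s δ σ τ' τ K hs hδ0 hσ0 hσ hτ'0 hτ'τ hK d ξ η h
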